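/- Let 0 < p < 1/2. There exists a constant c_p > 0 such that for every N ∈ ℕ and every p-atom a supported on I_N (so supp(a) ⊆ I_N, ‖a‖_∞ ≤ 2^{N/p}, ∫_{I_N} a dμ = 0), one has ∫_{G∖I_N} ( sup_{n > 2^N} (n+1)^{1−1/p} | ∫_{I_N} a(t) · Σ_{i=0}^{|n|−1} 2^i r_i(x+t) K_{2^i}^w(τ_i(x+t)) dμ(t) | )^p dμ(x) ≤ c_p. -/

import Mathlib

open MeasureTheory ENNReal

noncomputable section

/-- The Walsh group: countable product of copies of ℤ₂. -/
abbrev G : Type := ℕ → ZMod 2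

instance : TopologicalSpace (ZMod 2) := ⊥
instance : DiscreteTopology (ZMod 2) := ⟨rfl⟩
instance : IsTopologicalAddGroup (ZMod 2) :=
  { continuous_add := continuous_of_discreteTopology
    continuous_neg := continuous_of_discreteTopology }
instance : MeasurableSpace G := borel G
instance : BorelSpace G := ⟨rfl⟩

/-- The normalized Haar (= product) measure on `G`. -/
def μ : Measure G := Measure.addHaarMeasure (⊤ : TopologicalSpace.PositiveCompacts G)

/-- The `k`-th Rademacher function. -/
def rad (k : ℕ) (x : G) : ℝ := (-1 : ℝ) ^ (x k).val

/-- `|n| = ⌊log₂ n⌋`. -/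
def lg (n : ℕ) : ℕ := Nat.log 2 n

/-- The Walsh–Paley functions. -/
def walsh (n : ℕ) (x : G) : ℝ :=
  ∏ k ∈ Finset.range (n + 1), rad k x ^ (n.testBit k).toNat

/-- The Walsh–Kaczmarz functions. -/
def kacz (n : ℕ) (x : G) : ℝ :=
  if n = 0 then 1
  else rad (lg n) x *
    ∏ k ∈ Finset.range (lg n), rad (lg n - 1 - k) x ^ (n.testBit k).toNat

/-- Walsh–Paley Dirichlet kernel. -/
def DW (n : ℕ) (x : G) : ℝ := ∑ k ∈ Finset.range n, walsh k x

/-- Walsh–Kaczmarz Dirichlet kernel. -/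
def DK (n : ℕ) (x : G) : ℝ := ∑ k ∈ Finset.range n, kacz k x

/-- Walsh–Paley Fejér kernel (with `KW 0 = 0`). -/
def KW (n : ℕ) (x : G) : ℝ := (∑ k ∈ Finset.range n, DW k x) / n

/-- Walsh–Kaczmarz Fejér kernel. -/
def KK (n : ℕ) (x : G) : ℝ := (∑ k ∈ Finset.range n, DK k x) / n

/-- Reversal of the first `A` coordinates. -/
def tau (A : ℕ) (x : G) : G := fun k => if k < A then x (A - 1 - k) else x k

/-- Walsh–Fourier coefficients. -/
def coefW (f : G → ℝ) (i : ℕ) : ℝ := ∫ x, f x * walsh i x ∂μ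

/-- Walsh–Kaczmarz–Fourier coefficients. -/
def coefK (f : G → ℝ) (i : ℕ) : ℝ := ∫ x, f x * kacz i x ∂μ

/-- Partial sums of the Walsh–Fourier series. -/
def SW (f : G → ℝ) (M : ℕ) (x : G) : ℝ := ∑ i ∈ Finset.range M, coefW f i * walsh i x

/-- Partial sums of the Walsh–Kaczmarz–Fourier series. -/
def SK (f : G → ℝ) (M : ℕ) (x : G) : ℝ := ∑ i ∈ Finset.range M, coefK f i * kacz i x

/-- Fejér means of the Walsh–Kaczmarz–Fourier series. -/
def sigmaK (f : G → ℝ) (n : ℕ) (x : G) : ℝ := (∑ j ∈ Finset.range n, SK f j x) / n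

/-- The dyadic martingale maximal function. -/
def fstar (f : G → ℝ) (x : G) : ℝ≥0∞ := ⨆ n : ℕ, ENNReal.ofReal |SW f (2 ^ n) x|

/-- Dyadic interval of rank `n` around `x`. -/
def cyl (n : ℕ) (x : G) : Set G := {y : G | ∀ k < n, y k = x k}

/-- Dyadic interval `I_n` around `0`. -/
def In (n : ℕ) : Set G := cyl n 0

/-- `e t`: the element of `G` whose `t`-th coordinate is `1` and the rest are `0`. -/
def e (t : ℕ) : G := fun k => if k = t then 1 else 0

/-- `q_m = 2^{2m} + 2^{2m-2} + ⋯ + 2² + 2⁰`. -/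
def qA (m : ℕ) : ℕ := ∑ i ∈ Finset.range (m + 1), 4 ^ i

/-- `f_m = D_{2^{2m+1}}^w − D_{2^{2m}}^w`. -/
def fm (m : ℕ) (x : G) : ℝ := DW (2 ^ (2 * m + 1)) x - DW (2 ^ (2 * m)) x

/-- The weak `L^p` quasinorm `‖f‖_{L_{p,∞}} = sup_{λ>0} λ · μ{|f|>λ}^{1/p}`. -/
def wnorm (f : G → ℝ) (p : ℝ) : ℝ≥0∞ :=
  ⨆ (l : ℝ) (_ : 0 < l), ENNReal.ofReal l * μ {x : G | l < |f x|} ^ (1 / p)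

/-- The set `J_N^{m,l}` (with `m : ℤ`, `-1 ≤ m ≤ l`). -/
def Jset (N l : ℕ) (m : ℤ) : Set G :=
  {x : G | (∀ j : ℕ, m < (j : ℤ) → j < l → x j = 0) ∧ x l = 1 ∧
    (∀ j : ℕ, l < j → j < N → x j = 0) ∧ (0 ≤ m → x m.toNat = 1)}


/-! ### Auxiliary lemmas -/

section Aux

open TopologicalSpace

instance : IsProbabilityMeasure μ := by
  constructor
  have h := Measure.addHaarMeasure_self (K₀ := (⊤ : TopologicalSpace.PositiveCompacts G))
  rwa [TopologicalSpace.PositiveCompacts.coe_top] at h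

instance : Measure.IsAddLeftInvariant μ := by unfold μ; infer_instance

lemma measurable_eval (k : ℕ) : Measurable fun y : G => y k :=
  (continuous_apply k).measurable

lemma measurableSet_cyl (n : ℕ) (c : G) : MeasurableSet (cyl n c) := by
  have : cyl n c = ⋂ k ∈ Finset.range n, {y : G | y k = c k} := by
    ext y; simp [cyl, Finset.mem_range]
  rw [this]
  exact Finset.measurableSet_biInter _ fun k _ => (measurable_eval k) (measurableSet_singleton _)

lemma zmod2_cases (u : ZMod 2) : u = 0 ∨ u = 1 := by revert u; decide

lemma zmod2_add_self (u : ZMod 2) : u + u = 0 := by revert u; decide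

lemma zmod2_add_ne {u v : ZMod 2} (h : u ≠ v) : u + v = 1 := by revert u v; decide

lemma mu_cyl (n : ℕ) (c : G) : μ (cyl n c) = 2⁻¹ ^ n := by
  show μ {y : G | ∀ k < n, y k = c k} = 2⁻¹ ^ n
  induction n generalizing c with
  | zero => simp
  | succ n ih =>
    set e' : G := fun k => if k = n then 1 else 0 with he
    set A : Set G := {y : G | ∀ k < n + 1, y k = c k} with hA
    set A' : Set G := {y : G | (∀ k < n, y k = c k) ∧ y n = c n + 1} with hA'
    have hAeq : A = {y : G | (∀ k < n, y k = c k) ∧ y n = c n} := by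
      ext y
      constructor
      · intro h; exact ⟨fun k hk => h k (by omega), h n (by omega)⟩
      · rintro ⟨h1, h2⟩ k hk
        rcases Nat.lt_succ_iff_lt_or_eq.mp hk with h | h
        · exact h1 k h
        · subst h; exact h2
    have hApre : A = (fun y => e' + y) ⁻¹' A' := by
      rw [hAeq]
      ext y
      simp only [Set.mem_setOf_eq, Set.mem_preimage, hA', Pi.add_apply]
      constructor
      · rintro ⟨h1, h2⟩
        refine ⟨fun k hk => ?_, ?_⟩
        · show (if k = n then (1:ZMod 2) else 0) + y k = c k
          rw [if_neg (by omega : k ≠ n), zero_add]; exact h1 k hk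
        · show (if n = n then (1:ZMod 2) else 0) + y n = c n + 1
          rw [if_pos rfl, h2, add_comm]
      · rintro ⟨h1, h2⟩
        have h1' : ∀ k < n, y k = c k := by
          intro k hk
          have h1k : (if k = n then (1:ZMod 2) else 0) + y k = c k := h1 k hk
          rwa [if_neg (by omega : k ≠ n), zero_add] at h1k
        refine ⟨h1', ?_⟩
        replace h2 : (1 : ZMod 2) + y n = c n + 1 := by
          have h2' : (if n = n then (1:ZMod 2) else 0) + y n = c n + 1 := h2
          rwa [if_pos rfl] at h2'
        have : (1 : ZMod 2) + (1 : ZMod 2) = 0 := by decide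
        calc y n = 1 + (1 + y n) := by rw [← add_assoc, this, zero_add]
        _ = 1 + (c n + 1) := by rw [h2]
        _ = c n := by rw [add_comm (c n) 1, ← add_assoc, this, zero_add]
    have hmeasA : MeasurableSet A := measurableSet_cyl (n + 1) c
    have hmeasA' : MeasurableSet A' := by
      have : A' = {y : G | ∀ k < n + 1, y k = Function.update c n (c n + 1) k} := by
        ext y
        simp only [hA', Set.mem_setOf_eq]
        constructor
        · rintro ⟨h1, h2⟩ k hk
          rcases Nat.lt_succ_iff_lt_or_eq.mp hk with h | h
          · rw [Function.update_of_ne (by omega)]; exact h1 k h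
          · subst h; rw [Function.update_self]; exact h2
        · intro h
          refine ⟨fun k hk => ?_, ?_⟩
          · have := h k (by omega); rwa [Function.update_of_ne (by omega)] at this
          · have := h n (by omega); rwa [Function.update_self] at this
      rw [this]; exact measurableSet_cyl _ _
    have hinv : μ A = μ A' := by
      rw [hApre]; exact measure_preimage_add μ e' A'
    have hdisj : Disjoint A A' := by
      rw [hAeq]
      apply Set.disjoint_left.mpr
      rintro y ⟨_, h2⟩ ⟨_, h2'⟩
      rw [h2] at h2'
      have : (c n : ZMod 2) ≠ c n + 1 := by
        rcases zmod2_cases (c n) with h | h <;> rw [h] <;> decide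
      exact this h2'
    have hunion : A ∪ A' = {y : G | ∀ k < n, y k = c k} := by
      rw [hAeq]
      ext y
      simp only [Set.mem_union, Set.mem_setOf_eq, hA']
      constructor
      · rintro (⟨h1, _⟩ | ⟨h1, _⟩) <;> exact h1
      · intro h1
        rcases zmod2_cases (y n + c n) with h | h
        · left
          refine ⟨h1, ?_⟩
          have : y n + c n + c n = c n := by rw [h, zero_add]
          rwa [add_assoc, zmod2_add_self (c n), add_zero] at this
        · right
          refine ⟨h1, ?_⟩
          have : y n + c n + c n = 1 + c n := by rw [h]
          rwa [add_assoc, zmod2_add_self (c n), add_zero, add_comm] at this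
    have hsum : μ A + μ A' = 2⁻¹ ^ n := by
      rw [← measure_union hdisj hmeasA', hunion, ih c]
    rw [← hinv, ← two_mul] at hsum
    have h2 : (2 : ℝ≥0∞) ≠ 0 := by norm_num
    have h2' : (2 : ℝ≥0∞) ≠ ⊤ := by norm_num
    calc μ A = 2⁻¹ * (2 * μ A) := by rw [← mul_assoc, ENNReal.inv_mul_cancel h2 h2', one_mul]
    _ = 2⁻¹ * 2⁻¹ ^ n := by rw [hsum]
    _ = 2⁻¹ ^ (n + 1) := by rw [pow_succ, mul_comm]

/-! Walsh function lemmas -/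

lemma abs_rad (k : ℕ) (x : G) : |rad k x| = 1 := by
  rw [rad, abs_pow, abs_neg, abs_one, one_pow]

lemma rad_of_zero {k : ℕ} {x : G} (h : x k = 0) : rad k x = 1 := by
  rw [rad, h]; norm_num

lemma rad_of_one {k : ℕ} {x : G} (h : x k = 1) : rad k x = -1 := by
  rw [rad, h]
  have : (1 : ZMod 2).val = 1 := rfl
  rw [this, pow_one]

lemma rad_congr {k : ℕ} {x y : G} (h : x k = y k) : rad k x = rad k y := by
  rw [rad, rad, h]

lemma prod_rad_ext {n : ℕ} (x : G) {a b : ℕ} (ha : n < 2 ^ a) (hab : a ≤ b) :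
    ∏ k ∈ Finset.range b, rad k x ^ (n.testBit k).toNat
      = ∏ k ∈ Finset.range a, rad k x ^ (n.testBit k).toNat := by
  symm
  apply Finset.prod_subset (Finset.range_subset_range.mpr hab)
  intro k hk hk'
  simp only [Finset.mem_range, not_lt] at hk hk'
  have : n.testBit k = false :=
    Nat.testBit_lt_two_pow (lt_of_lt_of_le ha (Nat.pow_le_pow_right (by norm_num) hk'))
  rw [this]; rfl

lemma walsh_eq_prod (n m : ℕ) (hm : n < 2 ^ m) (x : G) :
    walsh n x = ∏ k ∈ Finset.range m, rad k x ^ (n.testBit k).toNat := by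
  rw [walsh, ← prod_rad_ext x ((Nat.lt_two_pow_self (n := n)).trans_le
      (Nat.pow_le_pow_right (by norm_num) (Nat.le_succ n))) (le_max_left (n+1) m),
    ← prod_rad_ext x hm (le_max_right (n+1) m)]

lemma walsh_congr {n i : ℕ} (hn : n < 2 ^ i) {x y : G} (h : ∀ k < i, x k = y k) :
    walsh n x = walsh n y := by
  rw [walsh_eq_prod n i hn x, walsh_eq_prod n i hn y]
  exact Finset.prod_congr rfl fun k hk => by
    rw [rad_congr (h k (Finset.mem_range.mp hk))]

lemma abs_walsh (n : ℕ) (x : G) : |walsh n x| = 1 := by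
  rw [walsh, Finset.abs_prod]
  apply Finset.prod_eq_one
  intro k _
  rw [abs_pow, abs_rad, one_pow]

lemma walsh_two_pow_add {A j : ℕ} (hj : j < 2 ^ A) (x : G) :
    walsh (2 ^ A + j) x = rad A x * walsh j x := by
  have hlt : 2 ^ A + j < 2 ^ (A + 1) := by
    rw [pow_succ]; omega
  rw [walsh_eq_prod _ (A + 1) hlt x, Finset.prod_range_succ,
    walsh_eq_prod j A hj x]
  have htA : (2 ^ A + j).testBit A = true := by
    have := Nat.testBit_two_pow_mul_add 1 hj A
    simp only [mul_one] at this
    rw [this, if_neg (lt_irrefl A), Nat.sub_self]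
    decide
  have ht : ∀ k < A, (2 ^ A + j).testBit k = j.testBit k := by
    intro k hk
    have := Nat.testBit_two_pow_mul_add 1 hj k
    simp only [mul_one] at this
    rw [this, if_pos hk]
  rw [htA, mul_comm]
  congr 1
  · simp
  · exact Finset.prod_congr rfl fun k hk => by
      rw [ht k (Finset.mem_range.mp hk)]

lemma DW_two_pow (A : ℕ) (x : G) : DW (2 ^ A) x = ∏ k ∈ Finset.range A, (1 + rad k x) := by
  induction A with
  | zero =>
    simp only [pow_zero, Finset.range_zero, Finset.prod_empty, DW, Finset.range_one,
      Finset.sum_singleton]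
    rw [walsh]
    simp
  | succ A ih =>
    have h2 : 2 ^ (A + 1) = 2 ^ A + 2 ^ A := by rw [pow_succ]; omega
    rw [h2, DW, Finset.sum_range_add, ← DW]
    have : ∀ i ∈ Finset.range (2 ^ A), walsh (2 ^ A + i) x = rad A x * walsh i x := by
      intro i hi
      exact walsh_two_pow_add (Finset.mem_range.mp hi) x
    rw [Finset.sum_congr rfl this, ← Finset.mul_sum, ← DW, ih, Finset.prod_range_succ]
    ring

lemma DW_two_pow_of_zero {A : ℕ} {x : G} (h : ∀ k < A, x k = 0) : DW (2 ^ A) x = 2 ^ A := by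
  rw [DW_two_pow]
  have : ∀ k ∈ Finset.range A, (1 : ℝ) + rad k x = 2 := by
    intro k hk
    rw [rad_of_zero (h k (Finset.mem_range.mp hk))]; norm_num
  rw [Finset.prod_congr rfl this, Finset.prod_const, Finset.card_range]

lemma DW_two_pow_of_one {A j : ℕ} {x : G} (hj : j < A) (h : x j = 1) : DW (2 ^ A) x = 0 := by
  rw [DW_two_pow]
  apply Finset.prod_eq_zero (Finset.mem_range.mpr hj)
  rw [rad_of_one h]; ring

lemma abs_DW_le (n : ℕ) (x : G) : |DW n x| ≤ n := by
  calc |DW n x| ≤ ∑ k ∈ Finset.range n, |walsh k x| := Finset.abs_sum_le_sum_abs _ _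
  _ = ∑ k ∈ Finset.range n, (1 : ℝ) :=
      Finset.sum_congr rfl fun k _ => abs_walsh k x
  _ = n := by simp

/-- `SA A x = ∑_{k < 2^A} D_k(x) = 2^A · K_{2^A}(x)`. -/
def SA (A : ℕ) (x : G) : ℝ := ∑ k ∈ Finset.range (2 ^ A), DW k x

lemma KW_two_pow (A : ℕ) (x : G) : KW (2 ^ A) x = SA A x / 2 ^ A := by
  rw [KW, SA]; norm_num

lemma DW_two_pow_add {A k : ℕ} (hk : k ≤ 2 ^ A) (x : G) :
    DW (2 ^ A + k) x = DW (2 ^ A) x + rad A x * DW k x := by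
  rw [DW, Finset.sum_range_add, ← DW]
  congr 1
  rw [DW, Finset.mul_sum]
  exact Finset.sum_congr rfl fun j hj =>
    walsh_two_pow_add (lt_of_lt_of_le (Finset.mem_range.mp hj) hk) x

lemma SA_succ (A : ℕ) (x : G) :
    SA (A + 1) x = (1 + rad A x) * SA A x + 2 ^ A * DW (2 ^ A) x := by
  have h2 : 2 ^ (A + 1) = 2 ^ A + 2 ^ A := by rw [pow_succ]; omega
  rw [SA, h2, Finset.sum_range_add, ← SA]
  have : ∀ k ∈ Finset.range (2 ^ A), DW (2 ^ A + k) x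
      = DW (2 ^ A) x + rad A x * DW k x := fun k hk =>
    DW_two_pow_add (le_of_lt (Finset.mem_range.mp hk)) x
  rw [Finset.sum_congr rfl this, Finset.sum_add_distrib, Finset.sum_const,
    Finset.card_range, ← Finset.mul_sum, ← SA]
  ring

lemma SA_congr {A : ℕ} {x y : G} (h : ∀ k < A, x k = y k) : SA A x = SA A y := by
  rw [SA, SA]
  refine Finset.sum_congr rfl fun k hk => ?_
  rw [DW, DW]
  refine Finset.sum_congr rfl fun j hj => ?_
  exact walsh_congr (lt_of_lt_of_le (Finset.mem_range.mp hj)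
    (le_of_lt (Finset.mem_range.mp hk))) h

lemma SA_eq_zero {A : ℕ} {x : G} {j k : ℕ} (hj : j < A) (hk : k < A) (hjk : j ≠ k)
    (h1 : x j = 1) (h2 : x k = 1) : SA A x = 0 := by
  induction A with
  | zero => omega
  | succ A ih =>
    rw [SA_succ]
    by_cases hjA : j = A
    · subst hjA
      rw [rad_of_one h1]
      have hkA : k < j := by omega
      rw [DW_two_pow_of_one hkA h2]
      ring
    · by_cases hkA : k = A
      · subst hkA
        rw [rad_of_one h2]
        rw [DW_two_pow_of_one (by omega : j < k) h1]
        ring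
      · rw [ih (by omega) (by omega), DW_two_pow_of_one (by omega : j < A) h1]
        ring

lemma abs_SA_le_single {A j : ℕ} {x : G} (hj : j < A) (h1 : x j = 1)
    (h0 : ∀ k < A, k ≠ j → x k = 0) : |SA A x| ≤ 2 ^ (A + j) := by
  induction A with
  | zero => omega
  | succ A ih =>
    rw [SA_succ]
    by_cases hjA : j = A
    · subst hjA
      rw [rad_of_one h1, DW_two_pow_of_zero (fun k hk => h0 k (by omega) (by omega))]
      have : (1 + (-1 : ℝ)) * SA j x + 2 ^ j * 2 ^ j = 2 ^ (j + j) := by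
        rw [pow_add]; ring
      rw [this, abs_pow]
      norm_num
      exact pow_le_pow_right₀ (by norm_num) (by omega)
    · have hjA' : j < A := by omega
      have hxA : x A = 0 := h0 A (by omega) (by omega)
      rw [rad_of_zero hxA, DW_two_pow_of_one hjA' h1]
      have h2 : (1 + (1:ℝ)) * SA A x + 2 ^ A * 0 = 2 * SA A x := by ring
      rw [h2, abs_mul, abs_two]
      have := ih hjA' (fun k hk hkj => h0 k (by omega) hkj)
      calc 2 * |SA A x| ≤ 2 * 2 ^ (A + j) := by linarith
      _ = 2 ^ (A + 1 + j) := by rw [pow_add, pow_add]; ring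

lemma abs_SA_le (A : ℕ) (x : G) : |SA A x| ≤ 4 ^ A := by
  calc |SA A x| ≤ ∑ k ∈ Finset.range (2 ^ A), |DW k x| := Finset.abs_sum_le_sum_abs _ _
  _ ≤ ∑ k ∈ Finset.range (2 ^ A), (2 ^ A : ℝ) := by
      apply Finset.sum_le_sum
      intro k hk
      refine (abs_DW_le k x).trans ?_
      have : k ≤ 2 ^ A := le_of_lt (Finset.mem_range.mp hk)
      exact_mod_cast this
  _ = 4 ^ A := by
      rw [Finset.sum_const, Finset.card_range]
      push_cast
      rw [(by norm_num : (4:ℝ) = 2 * 2), mul_pow]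
      ring

/-! The summand `Tm i y = 2^i · r_i(y) · K_{2^i}(τ_i y)` -/

/-- The `i`-th summand of the kernel. -/
def Tm (i : ℕ) (y : G) : ℝ := 2 ^ i * rad i y * KW (2 ^ i) (tau i y)

lemma continuous_rad (k : ℕ) : Continuous (rad k) := by
  have : rad k = (fun v : ZMod 2 => (-1 : ℝ) ^ v.val) ∘ (fun x : G => x k) := rfl
  rw [this]
  exact Continuous.comp continuous_of_discreteTopology (continuous_apply k)

lemma continuous_walsh (n : ℕ) : Continuous (walsh n) := by
  unfold walsh
  exact continuous_finset_prod _ fun k _ => (continuous_rad k).pow _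

lemma continuous_DW (n : ℕ) : Continuous (DW n) := by
  unfold DW
  exact continuous_finset_sum _ fun k _ => continuous_walsh k

lemma continuous_KW (n : ℕ) : Continuous (KW n) := by
  unfold KW
  exact (continuous_finset_sum _ fun k _ => continuous_DW k).div_const _

lemma continuous_tau (i : ℕ) : Continuous (tau i) := by
  unfold tau
  refine continuous_pi fun k => ?_
  by_cases h : k < i <;> simp only [h, if_true, if_false] <;> exact continuous_apply _

lemma continuous_Tm (i : ℕ) : Continuous (Tm i) := by
  unfold Tm
  exact (continuous_const.mul (continuous_rad i)).mul ((continuous_KW _).comp (continuous_tau i))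

lemma abs_Tm_le (i : ℕ) (y : G) : |Tm i y| ≤ 2 ^ i * 2 ^ i := by
  rw [Tm, KW_two_pow, abs_mul, abs_mul, abs_rad, mul_one, abs_pow, abs_two, abs_div]
  have h1 : |SA i (tau i y)| / |(2:ℝ) ^ i| ≤ 2 ^ i := by
    rw [abs_pow, abs_two, div_le_iff₀ (by positivity)]
    calc |SA i (tau i y)| ≤ 4 ^ i := abs_SA_le _ _
    _ = 2 ^ i * 2 ^ i := by rw [(by norm_num : (4:ℝ) = 2 * 2), mul_pow]
  calc (2:ℝ) ^ i * (|SA i (tau i y)| / |(2:ℝ) ^ i|) ≤ 2 ^ i * 2 ^ i :=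
    mul_le_mul_of_nonneg_left h1 (by positivity)

lemma Tm_congr {i : ℕ} {y z : G} (h : ∀ k ≤ i, y k = z k) : Tm i y = Tm i z := by
  unfold Tm
  rw [rad_congr (h i le_rfl), KW_two_pow, KW_two_pow]
  have htau : ∀ k < i, tau i y k = tau i z k := by
    intro k hk
    unfold tau
    rw [if_pos hk, if_pos hk]
    exact h (i - 1 - k) (by omega)
  rw [SA_congr htau]

lemma integrable_of_bdd {f : G → ℝ} (hf : Measurable f) {C : ℝ} (h : ∀ t, |f t| ≤ C)
    (s : Set G) : IntegrableOn f s μ := by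
  apply Integrable.integrableOn
  exact (integrable_const C).mono' hf.aestronglyMeasurable
    (ae_of_all _ fun t => by rw [Real.norm_eq_abs]; exact h t)

end Aux


section Aux2

lemma In_def (N : ℕ) : In N = {y : G | ∀ k < N, y k = 0} := by
  have : ∀ k, (0 : G) k = 0 := fun k => rfl
  simp [In, cyl]

lemma mem_In {N : ℕ} {t : G} (ht : t ∈ In N) : ∀ k < N, t k = 0 := by
  rw [In_def] at ht; exact ht

lemma measurableSet_In (N : ℕ) : MeasurableSet (In N) := measurableSet_cyl N 0

lemma tau_apply_lt {i k : ℕ} (hk : k < i) (y : G) : tau i y k = y (i - 1 - k) := by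
  rw [tau, if_pos hk]

/-- Integrability of the summands. -/
lemma integrable_term {a : G → ℝ} (ha : Measurable a) {Ca : ℝ} (hbd : ∀ t, |a t| ≤ Ca)
    (x : G) (i : ℕ) (s : Set G) :
    IntegrableOn (fun t => a t * Tm i (x + t)) s μ := by
  have hCa : 0 ≤ Ca := le_trans (abs_nonneg _) (hbd 0)
  apply integrable_of_bdd
  · exact ha.mul ((continuous_Tm i).comp (continuous_const.add continuous_id)).measurable
  · intro t
    rw [abs_mul]
    calc |a t| * |Tm i (x + t)| ≤ Ca * (2 ^ i * 2 ^ i) :=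
      mul_le_mul (hbd t) (abs_Tm_le i (x + t)) (abs_nonneg _) hCa
    _ = Ca * (2 ^ i * 2 ^ i) := rfl

/-- Cancellation: terms of index `i < N` integrate to zero against a mean-zero atom. -/
lemma integral_term_lt {N : ℕ} {a : G → ℝ}
    (hzero : (∫ x in In N, a x ∂μ) = 0) (x : G) {i : ℕ} (hi : i < N) :
    ∫ t in In N, a t * Tm i (x + t) ∂μ = 0 := by
  have heq : Set.EqOn (fun t => a t * Tm i (x + t)) (fun t => a t * Tm i x) (In N) := by
    intro t ht
    have : Tm i (x + t) = Tm i x := by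
      apply Tm_congr
      intro k hk
      have : t k = 0 := mem_In ht k (by omega)
      show x k + t k = x k
      rw [this, add_zero]
    simp only [this]
  rw [setIntegral_congr_fun (measurableSet_In N) heq, integral_mul_const, hzero, zero_mul]

/-- If `x` has two nonzero coordinates below `N ≤ i`, the `i`-th summand vanishes on `I_N`. -/
lemma Tm_eq_zero_two {N i : ℕ} (hNi : N ≤ i) {x : G} {l1 l2 : ℕ} (h1 : l1 < N) (h2 : l2 < N)
    (hne : l1 ≠ l2) (hx1 : x l1 = 1) (hx2 : x l2 = 1) {t : G} (ht : t ∈ In N) :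
    Tm i (x + t) = 0 := by
  have hco : ∀ l, l < N → x l = 1 → tau i (x + t) (i - 1 - l) = 1 := by
    intro l hl hxl
    rw [tau_apply_lt (by omega) _]
    have hll : i - 1 - (i - 1 - l) = l := by omega
    rw [hll]
    show x l + t l = 1
    rw [hxl, mem_In ht l hl, add_zero]
  have hSA : SA i (tau i (x + t)) = 0 := by
    refine SA_eq_zero (j := i - 1 - l1) (k := i - 1 - l2) (by omega) (by omega) (by omega)
      (hco l1 h1 hx1) (hco l2 h2 hx2)
  rw [Tm, KW_two_pow, hSA, zero_div, mul_zero]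

/-- Main estimate for a single summand of index `i ≥ N`, on the set where `x` has a
single nonzero coordinate `l` below `N`. -/
lemma integral_term_bound {N l i : ℕ} (hlN : l < N) (hNi : N ≤ i) {x : G}
    (hx1 : x l = 1) (hx0 : ∀ k < N, k ≠ l → x k = 0)
    {a : G → ℝ} (ha : Measurable a) {Ca : ℝ} (hbd : ∀ t, |a t| ≤ Ca) :
    |∫ t in In N, a t * Tm i (x + t) ∂μ| ≤ Ca * 2 ^ i / 2 ^ (l + 1) := by
  have hCa : 0 ≤ Ca := le_trans (abs_nonneg _) (hbd 0)
  set d : G := fun k => if k < N then 0 else x k with hd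
  set E : Set G := cyl i d with hE
  set M : ℝ := Ca * (2 ^ i * 2 ^ (i - 1 - l)) with hM
  have hM0 : 0 ≤ M := by positivity
  have hpt : ∀ t ∈ In N, |a t * Tm i (x + t)| ≤ E.indicator (fun _ => M) t := by
    intro t ht
    by_cases htE : t ∈ E
    · rw [Set.indicator_of_mem htE]
      have htE' : ∀ k < i, t k = d k := htE
      have hco : ∀ k, k < i → (x + t) k = (if k = l then 1 else 0 : ZMod 2) := by
        intro k hk
        show x k + t k = _
        by_cases hkN : k < N
        · have htk : t k = 0 := mem_In ht k hkN
          by_cases hkl : k = l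
          · subst hkl; rw [if_pos rfl, hx1, htk, add_zero]
          · rw [if_neg hkl, hx0 k hkN hkl, htk, add_zero]
        · have hdk : d k = x k := by simp only [hd]; rw [if_neg hkN]
          have htk : t k = x k := by rw [htE' k hk, hdk]
          rw [if_neg (by omega), htk, zmod2_add_self]
      have hz1 : tau i (x + t) (i - 1 - l) = 1 := by
        rw [tau_apply_lt (by omega)]
        have : i - 1 - (i - 1 - l) = l := by omega
        rw [this, hco l (by omega), if_pos rfl]
      have hz0 : ∀ m < i, m ≠ i - 1 - l → tau i (x + t) m = 0 := by
        intro m hm hml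
        rw [tau_apply_lt hm, hco (i - 1 - m) (by omega), if_neg (by omega)]
      have hSA := abs_SA_le_single (show i - 1 - l < i by omega) hz1 hz0
      have habs : |Tm i (x + t)| ≤ 2 ^ i * 2 ^ (i - 1 - l) := by
        rw [Tm, KW_two_pow, abs_mul, abs_mul, abs_rad, mul_one, abs_div]
        have e1 : |(2:ℝ) ^ i| = 2 ^ i := abs_of_nonneg (by positivity)
        rw [e1]
        have hq : |SA i (tau i (x + t))| / (2:ℝ) ^ i ≤ 2 ^ (i - 1 - l) := by
          rw [div_le_iff₀ (by positivity)]
          calc |SA i (tau i (x + t))| ≤ 2 ^ (i + (i - 1 - l)) := hSA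
          _ = 2 ^ (i - 1 - l) * 2 ^ i := by rw [pow_add]; ring
        exact mul_le_mul_of_nonneg_left hq (by positivity)
      rw [abs_mul, hM]
      exact mul_le_mul (hbd t) habs (abs_nonneg _) hCa
    · rw [Set.indicator_of_notMem htE]
      have : ∃ k, k < i ∧ t k ≠ d k := by
        by_contra h
        push_neg at h
        exact htE fun k hk => h k hk
      obtain ⟨k, hk, htk⟩ := this
      have hkN : N ≤ k := by
        by_contra hkN
        push_neg at hkN
        apply htk
        have hdk : d k = 0 := by simp only [hd]; rw [if_pos hkN]
        rw [mem_In ht k hkN, hdk]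
      have hxk1 : (x + t) k = 1 := by
        show x k + t k = 1
        apply zmod2_add_ne
        intro h
        apply htk
        have hdk : d k = x k := by simp only [hd]; rw [if_neg (by omega)]
        rw [hdk, ← h]
      have hxl1 : (x + t) l = 1 := by
        show x l + t l = 1
        rw [hx1, mem_In ht l hlN, add_zero]
      have hTm : Tm i (x + t) = 0 := by
        have hc1 : tau i (x + t) (i - 1 - k) = 1 := by
          rw [tau_apply_lt (by omega)]
          have : i - 1 - (i - 1 - k) = k := by omega
          rw [this]; exact hxk1
        have hc2 : tau i (x + t) (i - 1 - l) = 1 := by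
          rw [tau_apply_lt (by omega)]
          have : i - 1 - (i - 1 - l) = l := by omega
          rw [this]; exact hxl1
        have hSA : SA i (tau i (x + t)) = 0 :=
          SA_eq_zero (j := i - 1 - k) (k := i - 1 - l) (by omega) (by omega) (by omega) hc1 hc2
        rw [Tm, KW_two_pow, hSA, zero_div, mul_zero]
      rw [hTm, mul_zero, abs_zero]
  have hindint : Integrable (E.indicator (fun _ => M)) μ :=
    (integrable_const M).indicator (measurableSet_cyl i d)
  calc |∫ t in In N, a t * Tm i (x + t) ∂μ|
      ≤ ∫ t in In N, |a t * Tm i (x + t)| ∂μ := by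
        have h := norm_integral_le_integral_norm (μ := μ.restrict (In N))
          (f := fun t => a t * Tm i (x + t))
        rw [Real.norm_eq_abs] at h
        exact h
    _ ≤ ∫ t in In N, E.indicator (fun _ => M) t ∂μ := by
        apply integral_mono_of_nonneg (ae_of_all _ fun t => abs_nonneg _)
          hindint.integrableOn
        exact (ae_restrict_iff' (measurableSet_In N)).mpr (ae_of_all _ hpt)
    _ ≤ ∫ t, E.indicator (fun _ => M) t ∂μ := by
        apply setIntegral_le_integral hindint
        exact ae_of_all _ fun t => Set.indicator_nonneg (fun _ _ => hM0) t
    _ = (μ E).toReal • M := integral_indicator_const M (measurableSet_cyl i d)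
    _ = Ca * 2 ^ i / 2 ^ (l + 1) := by
        rw [hE, mu_cyl, smul_eq_mul]
        have h1 : ((2⁻¹ : ℝ≥0∞) ^ i).toReal = (2⁻¹ : ℝ) ^ i := by
          rw [ENNReal.toReal_pow, ENNReal.toReal_inv]
          norm_num
        rw [h1, hM]
        have h2 : (2:ℝ) ^ (i - 1 - l) * 2 ^ (l + 1) = 2 ^ i := by
          rw [← pow_add]
          congr 1
          omega
        have h3 : (2⁻¹ : ℝ) ^ i * 2 ^ i = 1 := by
          rw [inv_pow, inv_mul_cancel₀ (by positivity : (2:ℝ)^i ≠ 0)]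
        rw [eq_div_iff (by positivity : (2:ℝ)^(l+1) ≠ 0)]
        calc (2⁻¹ : ℝ) ^ i * (Ca * (2 ^ i * 2 ^ (i - 1 - l))) * 2 ^ (l + 1)
            = Ca * ((2⁻¹ : ℝ) ^ i * 2 ^ i) * (2 ^ (i - 1 - l) * 2 ^ (l + 1)) := by ring
        _ = Ca * 2 ^ i := by rw [h3, h2]; ring

end Aux2


section Aux3

/-- Full-sum estimate on the set where `x` has a single nonzero coordinate `l < N`. -/
lemma sum_bound {N l : ℕ} (hlN : l < N) {x : G}
    (hx1 : x l = 1) (hx0 : ∀ k < N, k ≠ l → x k = 0)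
    {a : G → ℝ} (ha : Measurable a) {Ca : ℝ} (hbd : ∀ t, |a t| ≤ Ca)
    (hzero : (∫ x in In N, a x ∂μ) = 0) {n : ℕ} (hn : 1 ≤ n) :
    |∫ t in In N, a t * ∑ i ∈ Finset.range (lg n), Tm i (x + t) ∂μ| ≤ Ca * n / 2 ^ (l + 1) := by
  have hCa : 0 ≤ Ca := le_trans (abs_nonneg _) (hbd 0)
  have heq : (fun t => a t * ∑ i ∈ Finset.range (lg n), Tm i (x + t))
      = fun t => ∑ i ∈ Finset.range (lg n), a t * Tm i (x + t) := by
    funext t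
    rw [Finset.mul_sum]
  rw [heq, integral_finset_sum _ (fun i _ => integrable_term ha hbd x i (In N))]
  calc |∑ i ∈ Finset.range (lg n), ∫ t in In N, a t * Tm i (x + t) ∂μ|
      ≤ ∑ i ∈ Finset.range (lg n), |∫ t in In N, a t * Tm i (x + t) ∂μ| :=
        Finset.abs_sum_le_sum_abs _ _
    _ ≤ ∑ i ∈ Finset.range (lg n), Ca * 2 ^ i / 2 ^ (l + 1) := by
        apply Finset.sum_le_sum
        intro i _
        by_cases hi : i < N
        · rw [integral_term_lt hzero x hi, abs_zero]
          positivity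
        · exact integral_term_bound hlN (by omega) hx1 hx0 ha hbd
    _ = (∑ i ∈ Finset.range (lg n), (2:ℝ) ^ i) * Ca / 2 ^ (l + 1) := by
        rw [Finset.sum_mul, Finset.sum_div]
        exact Finset.sum_congr rfl fun i _ => by ring
    _ ≤ Ca * n / 2 ^ (l + 1) := by
        have hgeom : ∑ i ∈ Finset.range (lg n), (2:ℝ) ^ i = 2 ^ (lg n) - 1 := by
          have := geom_sum_eq (by norm_num : (2:ℝ) ≠ 1) (lg n)
          rw [this]
          norm_num
        have hlog : (2:ℝ) ^ (lg n) ≤ n := by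
          have := Nat.pow_log_le_self 2 (by omega : n ≠ 0)
          exact_mod_cast this
        rw [hgeom, div_eq_mul_inv, div_eq_mul_inv]
        have hnum : ((2:ℝ) ^ (lg n) - 1) * Ca ≤ Ca * n := by nlinarith [hlog, hCa]
        exact mul_le_mul_of_nonneg_right hnum (by positivity)

/-- The maximal expression vanishes when `x` has two nonzero coordinates below `N`. -/
lemma sum_zero {N : ℕ} {x : G} {l1 l2 : ℕ} (h1 : l1 < N) (h2 : l2 < N) (hne : l1 ≠ l2)
    (hx1 : x l1 = 1) (hx2 : x l2 = 1)
    {a : G → ℝ} (ha : Measurable a) {Ca : ℝ} (hbd : ∀ t, |a t| ≤ Ca)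
    (hzero : (∫ x in In N, a x ∂μ) = 0) (n : ℕ) :
    ∫ t in In N, a t * ∑ i ∈ Finset.range (lg n), Tm i (x + t) ∂μ = 0 := by
  have heq : (fun t => a t * ∑ i ∈ Finset.range (lg n), Tm i (x + t))
      = fun t => ∑ i ∈ Finset.range (lg n), a t * Tm i (x + t) := by
    funext t
    rw [Finset.mul_sum]
  rw [heq, integral_finset_sum _ (fun i _ => integrable_term ha hbd x i (In N))]
  apply Finset.sum_eq_zero
  intro i _
  by_cases hi : i < N
  · exact integral_term_lt hzero x hi
  · have heq2 : Set.EqOn (fun t => a t * Tm i (x + t)) (fun _ => (0:ℝ)) (In N) := by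
      intro t ht
      have := Tm_eq_zero_two (by omega : N ≤ i) h1 h2 hne hx1 hx2 ht
      simp [this]
    rw [setIntegral_congr_fun (measurableSet_In N) heq2, integral_zero]

/-- The core real-number inequality. -/
lemma core_ineq {p : ℝ} (hp0 : 0 < p) (hp : p < 1 / 2) (N n : ℕ) (hn : 2 ^ N < n) :
    ((n:ℝ) + 1) ^ (1 - 1/p) * ((2:ℝ) ^ ((N:ℝ)/p) * n) ≤ (2:ℝ) ^ (2 * N) := by
  have hnpos0 : 0 < n := lt_of_le_of_lt (Nat.zero_le _) hn
  have hn1 : (1:ℝ) ≤ n := by exact_mod_cast hnpos0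
  have hnpos : (0:ℝ) < (n:ℝ) + 1 := by linarith
  have hq : 1 - 1/p + 1 ≤ 0 := by
    have h2 : 2 < 1/p := by
      rw [lt_div_iff₀ hp0]
      linarith
    linarith
  have h2N : (2:ℝ) ^ (N:ℝ) ≤ (n:ℝ) + 1 := by
    rw [Real.rpow_natCast]
    have : ((2:ℝ)) ^ N ≤ (n:ℝ) := by exact_mod_cast le_of_lt hn
    linarith
  have step1 : ((n:ℝ) + 1) ^ (1 - 1/p) * (n:ℝ) ≤ ((n:ℝ) + 1) ^ (1 - 1/p + 1) := by
    rw [Real.rpow_add_one (ne_of_gt hnpos)]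
    apply mul_le_mul_of_nonneg_left (by linarith) (Real.rpow_nonneg (le_of_lt hnpos) _)
  have step2 : ((n:ℝ) + 1) ^ (1 - 1/p + 1) ≤ ((2:ℝ) ^ (N:ℝ)) ^ (1 - 1/p + 1) :=
    Real.rpow_le_rpow_of_nonpos (Real.rpow_pos_of_pos two_pos _) h2N hq
  have step3 : ((2:ℝ) ^ (N:ℝ)) ^ (1 - 1/p + 1) * (2:ℝ) ^ ((N:ℝ)/p) = (2:ℝ) ^ (2 * N) := by
    rw [← Real.rpow_natCast 2 (2 * N), ← Real.rpow_mul (by norm_num : (0:ℝ) ≤ 2),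
      ← Real.rpow_add two_pos]
    congr 1
    push_cast
    field_simp
    ring
  calc ((n:ℝ) + 1) ^ (1 - 1/p) * ((2:ℝ) ^ ((N:ℝ)/p) * n)
      = (((n:ℝ) + 1) ^ (1 - 1/p) * n) * (2:ℝ) ^ ((N:ℝ)/p) := by ring
    _ ≤ ((2:ℝ) ^ (N:ℝ)) ^ (1 - 1/p + 1) * (2:ℝ) ^ ((N:ℝ)/p) := by
        apply mul_le_mul_of_nonneg_right (step1.trans step2)
          (Real.rpow_nonneg (by norm_num) _)
    _ = (2:ℝ) ^ (2 * N) := step3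

/-- The final numeric summation. -/
lemma final_num {p : ℝ} (hp0 : 0 < p) (hp : p < 1 / 2) (N : ℕ) :
    ∑ l ∈ Finset.range N, ((2:ℝ) ^ (2 * N) / 2 ^ (l + 1)) ^ p * (2⁻¹:ℝ) ^ N
      ≤ (1 - (2:ℝ) ^ (-p))⁻¹ + 1 := by
  set r : ℝ := (2:ℝ) ^ (-p) with hr
  have hr0 : 0 < r := Real.rpow_pos_of_pos two_pos _
  have hr1 : r < 1 := Real.rpow_lt_one_of_one_lt_of_neg (by norm_num) (by linarith)
  have hterm : ∀ l ∈ Finset.range N,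
      ((2:ℝ) ^ (2 * N) / 2 ^ (l + 1)) ^ p * (2⁻¹:ℝ) ^ N ≤ r ^ (l + 1) := by
    intro l _
    have a3 : (2⁻¹:ℝ) ^ N = (2:ℝ) ^ (-(N:ℝ)) := by
      rw [Real.rpow_neg (by norm_num : (0:ℝ) ≤ 2), Real.rpow_natCast, inv_pow]
    have e1 : ((2:ℝ) ^ (2 * N) / 2 ^ (l + 1)) ^ p * (2⁻¹:ℝ) ^ N
        = (2:ℝ) ^ (((2 * N : ℕ):ℝ) * p - ((l + 1 : ℕ):ℝ) * p - (N:ℝ)) := by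
      calc ((2:ℝ) ^ (2 * N) / 2 ^ (l + 1)) ^ p * (2⁻¹:ℝ) ^ N
          = ((2:ℝ) ^ (((2 * N : ℕ)):ℝ) / (2:ℝ) ^ (((l + 1 : ℕ)):ℝ)) ^ p * (2:ℝ) ^ (-(N:ℝ)) := by
            rw [Real.rpow_natCast, Real.rpow_natCast, a3]
        _ = ((2:ℝ) ^ ((((2 * N : ℕ)):ℝ) - (((l + 1 : ℕ)):ℝ))) ^ p * (2:ℝ) ^ (-(N:ℝ)) := by
            rw [Real.rpow_sub two_pos]
        _ = (2:ℝ) ^ (((((2 * N : ℕ)):ℝ) - (((l + 1 : ℕ)):ℝ)) * p) * (2:ℝ) ^ (-(N:ℝ)) := by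
            rw [← Real.rpow_mul (by norm_num : (0:ℝ) ≤ 2)]
        _ = (2:ℝ) ^ (((((2 * N : ℕ)):ℝ) - (((l + 1 : ℕ)):ℝ)) * p + (-(N:ℝ))) := by
            rw [← Real.rpow_add two_pos]
        _ = (2:ℝ) ^ (((2 * N : ℕ):ℝ) * p - ((l + 1 : ℕ):ℝ) * p - (N:ℝ)) := by
            congr 1
            ring
    rw [e1]
    have e2 : (r : ℝ) ^ (l + 1) = (2:ℝ) ^ (-(((l + 1 : ℕ):ℝ) * p)) := by
      rw [hr, ← Real.rpow_natCast ((2:ℝ) ^ (-p)) (l + 1),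
        ← Real.rpow_mul (by norm_num : (0:ℝ) ≤ 2)]
      congr 1
      ring
    rw [e2]
    apply Real.rpow_le_rpow_of_exponent_le (by norm_num)
    have hNp : ((2 * N : ℕ):ℝ) * p - (N:ℝ) ≤ 0 := by
      push_cast
      nlinarith
    push_cast
    push_cast at hNp
    linarith
  calc ∑ l ∈ Finset.range N, ((2:ℝ) ^ (2 * N) / 2 ^ (l + 1)) ^ p * (2⁻¹:ℝ) ^ N
      ≤ ∑ l ∈ Finset.range N, r ^ (l + 1) := Finset.sum_le_sum hterm
    _ ≤ ∑ l ∈ Finset.range N, r ^ l := by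
        apply Finset.sum_le_sum
        intro l _
        exact pow_le_pow_of_le_one (le_of_lt hr0) (le_of_lt hr1) (by omega)
    _ ≤ (1 - r)⁻¹ := by
        have hgeo := geom_sum_eq (ne_of_lt hr1) N
        rw [hgeo]
        rw [div_le_iff_of_neg (by linarith : r - 1 < 0)]
        have h1r : (1:ℝ) - r ≠ 0 := by linarith
        have : (1 - r)⁻¹ * (r - 1) = -1 := by
          have hrr : (r:ℝ) - 1 = -(1 - r) := by ring
          rw [hrr, mul_neg, inv_mul_cancel₀ h1r]
        rw [this]
        have : 0 ≤ r ^ N := by positivity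
        linarith
    _ ≤ (1 - r)⁻¹ + 1 := by linarith

end Aux3

/-- `p`-quasi-locality of the second operator `R²` in the proof of Theorem 1. -/
theorem R2_quasi_local (p : ℝ) (hp0 : 0 < p) (hp : p < 1 / 2) :
    ∃ c : ℝ, 0 < c ∧ ∀ N : ℕ, ∀ a : G → ℝ, Measurable a →
      (∀ x, x ∉ In N → a x = 0) → (∀ x, |a x| ≤ (2 : ℝ) ^ ((N : ℝ) / p)) →
      (∫ x in In N, a x ∂μ) = 0 →
      (∫⁻ x in (In N)ᶜ,
          (⨆ (n : ℕ) (_ : 2 ^ N < n),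
            ENNReal.ofReal (((n : ℝ) + 1) ^ (1 - 1 / p)) *
              ENNReal.ofReal
                |∫ t in In N,
                    a t * ∑ i ∈ Finset.range (lg n),
                      (2 : ℝ) ^ i * rad i (x + t) * KW (2 ^ i) (tau i (x + t))
                  ∂μ|) ^ p ∂μ)
        ≤ ENNReal.ofReal c := by
  have hr0 : 0 < (2:ℝ) ^ (-p) := Real.rpow_pos_of_pos two_pos _
  have hr1 : (2:ℝ) ^ (-p) < 1 :=
    Real.rpow_lt_one_of_one_lt_of_neg (by norm_num) (by linarith)
  have hcpos : (0:ℝ) < (1 - (2:ℝ) ^ (-p))⁻¹ + 1 := by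
    have h1 : (0:ℝ) < 1 - (2:ℝ)^(-p) := by linarith
    positivity
  refine ⟨(1 - (2:ℝ) ^ (-p))⁻¹ + 1, hcpos, ?_⟩
  intro N a ha hsupp hbd hzero
  have hCa0 : (0:ℝ) ≤ (2:ℝ) ^ ((N:ℝ)/p) := le_of_lt (Real.rpow_pos_of_pos two_pos _)
  have hTm : ∀ (y : G) (i : ℕ),
      (2:ℝ) ^ i * rad i y * KW (2 ^ i) (tau i y) = Tm i y := fun _ _ => rfl
  simp only [hTm]
  set B : ℕ → ℝ := fun l => (2:ℝ) ^ (2 * N) / 2 ^ (l + 1) with hB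
  have hB0 : ∀ l, 0 ≤ B l := fun l => by positivity
  set gb : G → ℝ≥0∞ := fun x => ∑ l ∈ Finset.range N,
    (cyl N (e l)).indicator (fun _ => ENNReal.ofReal ((B l) ^ p)) x with hgb
  have hgbm : Measurable gb := Finset.measurable_sum _ fun l _ =>
    measurable_const.indicator (measurableSet_cyl N (e l))
  have hpt : ∀ x ∈ (In N)ᶜ,
      (⨆ (n : ℕ) (_ : 2 ^ N < n),
        ENNReal.ofReal (((n : ℝ) + 1) ^ (1 - 1 / p)) *
          ENNReal.ofReal
            |∫ t in In N, a t * ∑ i ∈ Finset.range (lg n), Tm i (x + t) ∂μ|) ^ p ≤ gb x := by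
    intro x hx
    have hxI : ¬ ∀ k < N, x k = 0 := by
      intro h
      apply hx
      rw [In_def]
      exact h
    push_neg at hxI
    obtain ⟨l, hlN, hxl⟩ := hxI
    have hxl1 : x l = 1 := (zmod2_cases (x l)).resolve_left hxl
    by_cases hsingle : ∀ k < N, k ≠ l → x k = 0
    · -- single nonzero coordinate
      have hmem : x ∈ cyl N (e l) := by
        intro k hk
        show x k = (if k = l then (1:ZMod 2) else 0)
        by_cases hkl : k = l
        · subst hkl; rw [if_pos rfl]; exact hxl1
        · rw [if_neg hkl]; exact hsingle k hk hkl
      have hsup : (⨆ (n : ℕ) (_ : 2 ^ N < n),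
          ENNReal.ofReal (((n : ℝ) + 1) ^ (1 - 1 / p)) *
            ENNReal.ofReal
              |∫ t in In N, a t * ∑ i ∈ Finset.range (lg n), Tm i (x + t) ∂μ|)
          ≤ ENNReal.ofReal (B l) := by
        refine iSup_le fun n => iSup_le fun hn => ?_
        have hn1 : 1 ≤ n := by
          have : 0 < 2 ^ N := Nat.two_pow_pos N
          omega
        have hfrac := sum_bound hlN hxl1 hsingle ha hbd hzero hn1
        have hq0 : (0:ℝ) ≤ ((n : ℝ) + 1) ^ (1 - 1 / p) :=
          Real.rpow_nonneg (by positivity) _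
        calc ENNReal.ofReal (((n : ℝ) + 1) ^ (1 - 1 / p)) *
              ENNReal.ofReal
                |∫ t in In N, a t * ∑ i ∈ Finset.range (lg n), Tm i (x + t) ∂μ|
            ≤ ENNReal.ofReal (((n : ℝ) + 1) ^ (1 - 1 / p) *
                ((2:ℝ) ^ ((N:ℝ)/p) * n / 2 ^ (l + 1))) := by
              rw [← ENNReal.ofReal_mul hq0]
              exact ENNReal.ofReal_le_ofReal (mul_le_mul_of_nonneg_left hfrac hq0)
          _ ≤ ENNReal.ofReal (B l) := by
              apply ENNReal.ofReal_le_ofReal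
              have hcore := core_ineq hp0 hp N n hn
              have heq : ((n : ℝ) + 1) ^ (1 - 1 / p) * ((2:ℝ) ^ ((N:ℝ)/p) * n / 2 ^ (l + 1))
                  = ((n : ℝ) + 1) ^ (1 - 1 / p) * ((2:ℝ) ^ ((N:ℝ)/p) * n) / 2 ^ (l + 1) := by
                ring
              rw [heq, hB]
              rw [div_eq_mul_inv, div_eq_mul_inv]
              exact mul_le_mul_of_nonneg_right hcore (by positivity)
      calc (⨆ (n : ℕ) (_ : 2 ^ N < n),
          ENNReal.ofReal (((n : ℝ) + 1) ^ (1 - 1 / p)) *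
            ENNReal.ofReal
              |∫ t in In N, a t * ∑ i ∈ Finset.range (lg n), Tm i (x + t) ∂μ|) ^ p
          ≤ (ENNReal.ofReal (B l)) ^ p := ENNReal.rpow_le_rpow hsup (le_of_lt hp0)
        _ = ENNReal.ofReal ((B l) ^ p) :=
            ENNReal.ofReal_rpow_of_nonneg (hB0 l) (le_of_lt hp0)
        _ ≤ gb x := by
            have h := Finset.single_le_sum
              (f := fun l' => (cyl N (e l')).indicator
                (fun _ => ENNReal.ofReal ((B l') ^ p)) x)
              (fun i _ => zero_le) (Finset.mem_range.mpr hlN)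
            simpa [Set.indicator_of_mem hmem] using h
    · -- two nonzero coordinates: everything vanishes
      push_neg at hsingle
      obtain ⟨k, hkN, hkl, hxk⟩ := hsingle
      have hxk1 : x k = 1 := (zmod2_cases (x k)).resolve_left hxk
      have hzero' : ∀ n : ℕ,
          ∫ t in In N, a t * ∑ i ∈ Finset.range (lg n), Tm i (x + t) ∂μ = 0 := fun n =>
        sum_zero hkN hlN hkl hxk1 hxl1 ha hbd hzero n
      have hsup0 : (⨆ (n : ℕ) (_ : 2 ^ N < n),
          ENNReal.ofReal (((n : ℝ) + 1) ^ (1 - 1 / p)) *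
            ENNReal.ofReal
              |∫ t in In N, a t * ∑ i ∈ Finset.range (lg n), Tm i (x + t) ∂μ|) = 0 := by
        apply le_antisymm _ zero_le
        refine iSup_le fun n => iSup_le fun hn => ?_
        rw [hzero' n, abs_zero, ENNReal.ofReal_zero, mul_zero]
      rw [hsup0, ENNReal.zero_rpow_of_pos hp0]
      exact zero_le
  calc (∫⁻ x in (In N)ᶜ,
        (⨆ (n : ℕ) (_ : 2 ^ N < n),
          ENNReal.ofReal (((n : ℝ) + 1) ^ (1 - 1 / p)) *
            ENNReal.ofReal
              |∫ t in In N, a t * ∑ i ∈ Finset.range (lg n), Tm i (x + t) ∂μ|) ^ p ∂μ)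
      ≤ ∫⁻ x in (In N)ᶜ, gb x ∂μ := setLIntegral_mono hgbm hpt
    _ ≤ ∫⁻ x, gb x ∂μ := setLIntegral_le_lintegral _ _
    _ = ∑ l ∈ Finset.range N, ENNReal.ofReal ((B l) ^ p) * μ (cyl N (e l)) := by
        rw [hgb]
        rw [lintegral_finset_sum _ (fun l _ =>
          measurable_const.indicator (measurableSet_cyl N (e l)))]
        exact Finset.sum_congr rfl fun l _ =>
          lintegral_indicator_const (measurableSet_cyl N (e l)) _
    _ = ∑ l ∈ Finset.range N, ENNReal.ofReal ((B l) ^ p * (2⁻¹:ℝ) ^ N) := by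
        refine Finset.sum_congr rfl fun l _ => ?_
        rw [mu_cyl]
        have h12 : (2⁻¹ : ℝ≥0∞) ^ N = ENNReal.ofReal ((2⁻¹:ℝ) ^ N) := by
          rw [ENNReal.ofReal_pow (by norm_num)]
          congr 1
          rw [ENNReal.ofReal_inv_of_pos (by norm_num)]
          norm_num
        rw [h12, ← ENNReal.ofReal_mul (by positivity)]
    _ = ENNReal.ofReal (∑ l ∈ Finset.range N, (B l) ^ p * (2⁻¹:ℝ) ^ N) :=
        (ENNReal.ofReal_sum_of_nonneg fun l _ => by positivity).symm
    _ ≤ ENNReal.ofReal ((1 - (2:ℝ) ^ (-p))⁻¹ + 1) :=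
        ENNReal.ofReal_le_ofReal (final_num hp0 hp N)
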